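/- Let Φ1 be a state, let M be a valid move for Φ1 of type 1, 2 or 3 which is not of the form T3^{ik} (i.e., if M is a type 3 move, its second index differs from k), and suppose the type 2 move T2^k is invalid for M(Φ1). Then, after swapping the two moves, it is not possible that both are invalid: either T2^k is valid for Φ1, or M is valid for T2^k(Φ1). -/

import Mathlib

namespace CPaper


/-- The six types of moves on states (all indices 0-based). -/
inductive Move where
  | t1 (d : ℕ)
  | t2 (i : ℕ)
  | t3 (i j : ℕ)
  | t4 (i j : ℕ)
  | t5 (i j : ℕ)
  | t6 (i j : ℕ)

/-- A state is a list of tuples of integers. -/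
abbrev State := List (List ℤ)

/-- A genuine state: at least one tuple, and all tuples nonempty. -/
def IsState (Φ : State) : Prop := Φ ≠ [] ∧ ∀ t ∈ Φ, t ≠ []

/-- The entries of a state, read in order (flattened). -/
def entries (Φ : State) : List ℤ := Φ.flatten

/-- The number of positions of a state. -/
def numPos (Φ : State) : ℕ := (entries Φ).length

/-- The value at the (0-based) position `i` of the state `Φ`. -/
def entry (Φ : State) (i : ℕ) : ℤ := (entries Φ).getD i 0

/-- The (0-based) index of the tuple containing the flat position `i`. -/
def tupleIdx : State → ℕ → ℕ
  | [], _ => 0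
  | t :: ts, i => if i < t.length then 0 else tupleIdx ts (i - t.length) + 1

/-- Positions `i` and `j` lie in the same tuple of `Φ`. -/
def SameTuple (Φ : State) (i j : ℕ) : Prop := tupleIdx Φ i = tupleIdx Φ j

/-- Position `i` is dominant in `Φ`: its value bounds the absolute value of
every entry of the tuple containing it. -/
def DominantAt (Φ : State) (i : ℕ) : Prop :=
  ∀ k, k < numPos Φ → SameTuple Φ i k → |entry Φ k| ≤ entry Φ i

/-- Apply `f` at flat position `i`, preserving the tuple structure. -/
def modifyFlat (f : ℤ → ℤ) : ℕ → State → State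
  | _, [] => []
  | i, t :: ts =>
    if i < t.length then (t.take i ++ f (t.getD i 0) :: t.drop (i + 1)) :: ts
    else t :: modifyFlat f (i - t.length) ts

/-- Concatenate the `d`-th and `(d+1)`-th tuples of `Φ` (0-based). -/
def joinAt (Φ : State) (d : ℕ) : State :=
  Φ.take d ++ (Φ.getD d [] ++ Φ.getD (d + 1) []) :: Φ.drop (d + 2)

/-- The action of a move on a state. -/
def Move.apply : Move → State → State
  | .t1 d, Φ => joinAt Φ d
  | .t2 i, Φ => modifyFlat (· + 1) i Φ
  | .t3 i j, Φ => modifyFlat (· - 1) j (modifyFlat (· + 1) i Φ)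
  | .t4 i j, Φ => modifyFlat (· - 1) j (modifyFlat (· + 1) i Φ)
  | .t5 i j, Φ => modifyFlat (· + 1) j (modifyFlat (· + 1) i Φ)
  | .t6 i j, Φ => modifyFlat (· + 1) j (modifyFlat (· + 1) i Φ)

/-- A move is admissible for `Φ` when its indices are within bounds. -/
def Move.Admissible : Move → State → Prop
  | .t1 d, Φ => d + 1 < Φ.length
  | .t2 i, Φ => i < numPos Φ
  | .t3 i j, Φ => i < numPos Φ ∧ j < numPos Φ ∧ i ≠ j
  | .t4 i j, Φ => i < numPos Φ ∧ j < numPos Φ ∧ i ≠ j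
  | .t5 i j, Φ => i < numPos Φ ∧ j < numPos Φ ∧ i ≠ j
  | .t6 i j, Φ => i < numPos Φ ∧ j < numPos Φ ∧ i ≠ j

/-- Validity of a move for a state. -/
def Move.Valid : Move → State → Prop
  | .t1 d, Φ => d + 1 < Φ.length
  | .t2 i, Φ => i < numPos Φ ∧ DominantAt Φ i
  | .t3 i j, Φ =>
      i < numPos Φ ∧ j < numPos Φ ∧ i ≠ j ∧ SameTuple Φ i j ∧ DominantAt Φ i ∧ entry Φ j ≤ 0
  | .t4 i j, Φ =>
      i < numPos Φ ∧ j < numPos Φ ∧ i ≠ j ∧ SameTuple Φ i j ∧ DominantAt Φ i ∧ 0 < entry Φ j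
  | .t5 i j, Φ =>
      i < numPos Φ ∧ j < numPos Φ ∧ i ≠ j ∧ SameTuple Φ i j ∧ DominantAt Φ i ∧ entry Φ j < 0
  | .t6 i j, Φ =>
      i < numPos Φ ∧ j < numPos Φ ∧ i ≠ j ∧ SameTuple Φ i j ∧ DominantAt Φ i ∧ 0 ≤ entry Φ j

def Move.isType1 : Move → Prop
  | .t1 _ => True
  | _ => False

def Move.isType2 : Move → Prop
  | .t2 _ => True
  | _ => False

def Move.isType3 : Move → Prop
  | .t3 _ _ => True
  | _ => False

/-- The move is of one of the types 1, 2 or 3. -/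
def Move.isType123 : Move → Prop
  | .t1 _ => True
  | .t2 _ => True
  | .t3 _ _ => True
  | _ => False

/-- `ValidSeq ms Φ Ψ`: the list of moves `ms`, applied in order starting from `Φ`,
consists of valid moves and ends at `Ψ`. -/
def ValidSeq : List Move → State → State → Prop
  | [], Φ, Ψ => Φ = Ψ
  | m :: ms, Φ, Ψ => m.Valid Φ ∧ ValidSeq ms (m.apply Φ) Ψ

/-- A tuple of integers is C*_{Z,6}-realizable: the one-tuple state `[l]` is reachable
from `((0),...,(0))` by a finite sequence of valid moves of types 1–6. -/
def CStarZ6 (l : List ℤ) : Prop :=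
  ∃ ms : List Move, ValidSeq ms (List.replicate l.length ([0] : List ℤ)) [l]

/-- A tuple of integers is C*_{Z,3}-realizable: the one-tuple state `[l]` is reachable
from `((0),...,(0))` by a finite sequence of valid moves of types 1, 2 and 3. -/
def CStarZ3 (l : List ℤ) : Prop :=
  ∃ ms : List Move, (∀ m ∈ ms, m.isType123) ∧
    ValidSeq ms (List.replicate l.length ([0] : List ℤ)) [l]


/-! If `k` is dominant in `Φ`, then `T2^k` is already valid for `Φ`. Otherwise raising `Φ[k]` by
one cannot break the dominance of the position that `M` needs, and the other conditions of `M`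
do not read the value at `k` (for a type 3 move `T3^{ij}` this is where `j ≠ k` is needed). -/

theorem map_length_modifyFlat (f : ℤ → ℤ) :
    ∀ (i : ℕ) (Φ : State), (modifyFlat f i Φ).map List.length = Φ.map List.length
  | _, [] => rfl
  | i, t :: ts => by
    by_cases hit : i < t.length
    · simp only [modifyFlat, if_pos hit, List.map_cons, List.length_append, List.length_take,
        List.length_cons, List.length_drop]
      congr 1
      omega
    · simp only [modifyFlat, if_neg hit, List.map_cons,
        map_length_modifyFlat f (i - t.length) ts]

theorem length_modifyFlat (f : ℤ → ℤ) (i : ℕ) (Φ : State) :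
    (modifyFlat f i Φ).length = Φ.length := by
  simpa using congrArg List.length (map_length_modifyFlat f i Φ)

theorem numPos_eq_sum_map_length (Φ : State) : numPos Φ = (Φ.map List.length).sum := by
  simp [numPos, entries]

theorem numPos_modifyFlat (f : ℤ → ℤ) (i : ℕ) (Φ : State) :
    numPos (modifyFlat f i Φ) = numPos Φ := by
  rw [numPos_eq_sum_map_length, numPos_eq_sum_map_length, map_length_modifyFlat]

theorem entries_joinAt : ∀ (Φ : State) (d : ℕ), entries (joinAt Φ d) = entries Φ
  | [], _ => by simp [joinAt, entries]
  | [_], 0 => by simp [joinAt, entries]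
  | _ :: _ :: _, 0 => by simp [joinAt, entries]
  | t :: ts, d + 1 => by
    have ih := entries_joinAt ts d
    simp_all [joinAt, entries]

theorem numPos_apply (M : Move) (Φ : State) : numPos (M.apply Φ) = numPos Φ := by
  cases M <;> simp only [Move.apply, numPos_modifyFlat]
  simp only [numPos, entries_joinAt]

theorem tupleIdx_eq_of_map_length_eq :
    ∀ {Φ Ψ : State}, Φ.map List.length = Ψ.map List.length →
      ∀ i, tupleIdx Φ i = tupleIdx Ψ i
  | [], [], _, _ => rfl
  | t :: ts, s :: ss, h, i => by
    simp only [List.map_cons, List.cons.injEq] at h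
    simp only [tupleIdx, h.1, tupleIdx_eq_of_map_length_eq h.2]

theorem sameTuple_modifyFlat (f : ℤ → ℤ) (i a b : ℕ) (Φ : State) :
    SameTuple (modifyFlat f i Φ) a b ↔ SameTuple Φ a b := by
  simp only [SameTuple, tupleIdx_eq_of_map_length_eq (map_length_modifyFlat f i Φ)]

theorem entries_modifyFlat (f : ℤ → ℤ) :
    ∀ (i : ℕ) (Φ : State), i < numPos Φ →
      entries (modifyFlat f i Φ) = (entries Φ).set i (f (entry Φ i))
  | i, [], h => by simp [numPos, entries] at h
  | i, t :: ts, h => by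
    by_cases hit : i < t.length
    · simp only [modifyFlat, if_pos hit, entries, List.flatten_cons, entry]
      rw [List.set_append_left _ _ hit, List.getD_append _ _ _ _ hit,
        List.set_eq_take_append_cons_drop, if_pos hit]
    · have hlen : i - t.length < numPos ts := by
        simp only [numPos, entries, List.flatten_cons, List.length_append] at h ⊢
        omega
      have ih := entries_modifyFlat f (i - t.length) ts hlen
      simp only [entries] at ih
      have hti : t.length ≤ i := le_of_not_gt hit
      simp only [modifyFlat, if_neg hit, entries, List.flatten_cons, entry, ih,
        List.set_append_right _ _ hti, List.getD_append_right _ _ _ _ hti]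

theorem entry_modifyFlat_self (f : ℤ → ℤ) {i : ℕ} {Φ : State} (hi : i < numPos Φ) :
    entry (modifyFlat f i Φ) i = f (entry Φ i) := by
  have : i < (entries Φ).length := hi
  simp [entry, entries_modifyFlat f i Φ hi, List.getD_eq_getElem?_getD, this]

theorem entry_modifyFlat_of_ne (f : ℤ → ℤ) {i m : ℕ} {Φ : State} (hi : i < numPos Φ)
    (hm : i ≠ m) : entry (modifyFlat f i Φ) m = entry Φ m := by
  simp [entry, entries_modifyFlat f i Φ hi, List.getD_eq_getElem?_getD, hm]

theorem DominantAt.of_sameTuple_of_entry_eq {Φ : State} {i k : ℕ} (hi : DominantAt Φ i)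
    (hik : SameTuple Φ i k) (heq : entry Φ k = entry Φ i) : DominantAt Φ k := by
  intro m hm hkm
  rw [heq]
  exact hi m hm (hik.trans hkm)

/-- Raising a non-dominant entry by one keeps it within the bound of a dominant entry of its
tuple: it could only overtake if it were equal to that entry, and hence dominant itself. -/
theorem DominantAt.modifyFlat_add_one {Φ : State} {i k : ℕ} (hi : DominantAt Φ i)
    (hk : k < numPos Φ) (hkd : ¬ DominantAt Φ k) :
    DominantAt (modifyFlat (· + 1) k Φ) i := by
  have hki : k ≠ i := by rintro rfl; exact hkd hi
  intro m hm him
  rw [numPos_modifyFlat] at hm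
  rw [sameTuple_modifyFlat] at him
  rw [entry_modifyFlat_of_ne _ hk hki]
  obtain rfl | hkm := eq_or_ne k m
  · rw [entry_modifyFlat_self _ hk]
    have hbound := hi k hk him
    have hne : entry Φ k ≠ entry Φ i := fun heq => hkd (hi.of_sameTuple_of_entry_eq him heq)
    rw [abs_le] at hbound ⊢
    omega
  · rw [entry_modifyFlat_of_ne _ hk hkm]
    exact hi m hm him

theorem M_valid_T2_invalid_swap_general (Φ : State) (M : Move)
    (hM : M.isType123) (k : ℕ) (hnot : ∀ i, M ≠ Move.t3 i k)
    (hval : M.Valid Φ)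
    (hadm : (Move.t2 k).Admissible (M.apply Φ)) :
    (Move.t2 k).Valid Φ ∨ M.Valid ((Move.t2 k).apply Φ) := by
  have hk : k < numPos Φ := by rwa [Move.Admissible, numPos_apply] at hadm
  by_cases hdk : DominantAt Φ k
  · exact Or.inl ⟨hk, hdk⟩
  right
  cases M with
  | t1 d => rwa [Move.Valid, Move.apply, length_modifyFlat]
  | t2 i =>
    obtain ⟨hi, hdom⟩ := hval
    exact ⟨by rwa [Move.apply, numPos_modifyFlat], hdom.modifyFlat_add_one hk hdk⟩
  | t3 i j =>
    obtain ⟨hi, hj, hij, hst, hdom, hj0⟩ := hval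
    have hkj : k ≠ j := fun h => hnot i (by rw [h])
    refine ⟨?_, ?_, hij, (sameTuple_modifyFlat _ _ _ _ _).2 hst,
      hdom.modifyFlat_add_one hk hdk, ?_⟩
    · rwa [Move.apply, numPos_modifyFlat]
    · rwa [Move.apply, numPos_modifyFlat]
    · rwa [Move.apply, entry_modifyFlat_of_ne _ hk hkj]
  | t4 | t5 | t6 => exact hM.elim

/-- If a valid move `M` of type 1, 2 or 3 that is not of the form `T3^{ik}` is
followed by an invalid (admissible but not valid) type 2 move `T2^k`, then after
the swap it is not possible that both moves are invalid. -/
theorem M_valid_T2_invalid_swap (Φ : State) (hΦ : IsState Φ) (M : Move)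
    (hM : M.isType123) (k : ℕ) (hnot : ∀ i, M ≠ Move.t3 i k)
    (hval : M.Valid Φ)
    (hadm : (Move.t2 k).Admissible (M.apply Φ))
    (hinv : ¬ (Move.t2 k).Valid (M.apply Φ)) :
    (Move.t2 k).Valid Φ ∨ M.Valid ((Move.t2 k).apply Φ) :=
  M_valid_T2_invalid_swap_general Φ M hM k hnot hval hadm

end CPaper
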